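/- Let N ≥ 2, C > 0 and α₁, …, α_N > 0, and write Σα = α₁ + ⋯ + α_N. The system of equations α_k = (A_k/2)·(S − C) for k = 1, …, N, where S = A₁ + ⋯ + A_N, has a unique solution with all A_k > 0 and S > C, namely S = (C/2)·(1 + √(1 + 8·Σα/C²)) and A_k = (α_k/Σα)·S; moreover for this solution C·A_k/S = C·α_k/Σα for every k. -/

import Mathlib

/-!
Summing the `N` equations `α_k = (A_k/2)(S − C)` gives `Σα = (S/2)(S − C)`, a quadratic in the
total rate `S` whose only root above `C` is `S₀ = (C/2)(1 + √(1 + 8Σα/C²))`. Each equation then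
forces `A_k = 2α_k/(S₀ − C) = α_k S₀/Σα`, so the rates, and hence the throughputs, are
proportional to the `α_k`.
-/

open Finset

/-- The positive root of `S² − C S − 2a`. -/
noncomputable def stationarySum (C a : ℝ) : ℝ := (C / 2) * (1 + Real.sqrt (1 + 8 * a / C ^ 2))

section StationarySum

variable {C a : ℝ}

theorem stationarySum_mul_sub_eq (hC : C ≠ 0) (ha : 0 ≤ a) :
    stationarySum C a * (stationarySum C a - C) = 2 * a := by
  have hsq : Real.sqrt (1 + 8 * a / C ^ 2) ^ 2 = 1 + 8 * a / C ^ 2 :=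
    Real.sq_sqrt (by positivity)
  unfold stationarySum
  generalize Real.sqrt (1 + 8 * a / C ^ 2) = r at hsq ⊢
  field_simp at hsq ⊢
  linear_combination hsq

theorem stationarySum_pos (hC : 0 < C) : 0 < stationarySum C a := by
  unfold stationarySum
  positivity

theorem lt_stationarySum (hC : 0 < C) (ha : 0 < a) : C < stationarySum C a := by
  have hroot : 1 < Real.sqrt (1 + 8 * a / C ^ 2) :=
    Real.lt_sqrt_of_sq_lt (by rw [one_pow]; linarith [show 0 < 8 * a / C ^ 2 by positivity])
  unfold stationarySum
  nlinarith

-- The other root of `S² − C S − 2a` is `C − stationarySum C a < C`.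
theorem eq_stationarySum_of_mul_sub_eq {S : ℝ} (hC : 0 < C) (hS : C < S)
    (h : S * (S - C) = 2 * a) : S = stationarySum C a := by
  have ha : 0 ≤ a := by nlinarith
  have h₀ := stationarySum_mul_sub_eq hC.ne' ha
  have hsum : 0 < S + stationarySum C a - C := by linarith [stationarySum_pos (a := a) hC]
  have hprod : (S - stationarySum C a) * (S + stationarySum C a - C) = 0 := by
    linear_combination h - h₀
  linarith [(mul_eq_zero.mp hprod).resolve_right hsum.ne']

end StationarySum

section Proportional

variable {ι : Type*} [Fintype ι] {α A : ι → ℝ} {T : ℝ}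

theorem sum_eq_of_eq_div_sum_mul (hα : ∑ j, α j ≠ 0) (hA : ∀ k, A k = (α k / ∑ j, α j) * T) :
    ∑ j, A j = T := by
  simp_rw [hA, ← Finset.sum_mul, ← Finset.sum_div, div_self hα, one_mul]

theorem mul_div_sum_eq_of_eq_div_sum_mul (hα : ∑ j, α j ≠ 0) (hT : T ≠ 0)
    (hA : ∀ k, A k = (α k / ∑ j, α j) * T) (C : ℝ) (k : ι) :
    C * A k / ∑ j, A j = C * α k / ∑ j, α j := by
  rw [sum_eq_of_eq_div_sum_mul hα hA, hA k]
  field_simp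

end Proportional

theorem stationary_iff_eq_div_sum_mul_stationarySum {ι : Type*} [Fintype ι] [Nonempty ι]
    {C : ℝ} (hC : 0 < C) {α : ι → ℝ} (hα : ∀ k, 0 < α k) (A : ι → ℝ) :
    ((∀ k, 0 < A k) ∧ C < ∑ j, A j ∧ ∀ k, α k = (A k / 2) * ((∑ j, A j) - C)) ↔
      ∀ k, A k = (α k / ∑ j, α j) * stationarySum C (∑ j, α j) := by
  have hsumα : 0 < ∑ j, α j := Finset.sum_pos (fun k _ => hα k) Finset.univ_nonempty
  have hroot := stationarySum_mul_sub_eq hC.ne' hsumα.le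
  constructor
  · rintro ⟨-, hCA, hrate⟩ k
    have htotal : (∑ j, A j) * ((∑ j, A j) - C) = 2 * ∑ j, α j := by
      simp_rw [hrate, ← Finset.sum_mul, ← Finset.sum_div]
      ring
    have hS := eq_stationarySum_of_mul_sub_eq hC hCA htotal
    have hk := hrate k
    rw [hS] at hk
    field_simp
    linear_combination (-stationarySum C (∑ j, α j)) * hk - (A k / 2) * hroot
  · intro hA
    have hS := sum_eq_of_eq_div_sum_mul hsumα.ne' hA
    refine ⟨fun k => ?_, hS ▸ lt_stationarySum hC hsumα, fun k => ?_⟩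
    · rw [hA k]
      exact mul_pos (div_pos (hα k) hsumα) (stationarySum_pos hC)
    · rw [hS, hA k]
      field_simp
      linear_combination (-α k) * hroot

theorem lqf_N_flow_stationary (N : ℕ) (hN : 2 ≤ N) (C : ℝ) (hC : 0 < C)
    (α : Fin N → ℝ) (hα : ∀ k, 0 < α k) :
    (∀ A : Fin N → ℝ,
      ((∀ k, 0 < A k) ∧ C < ∑ j, A j ∧
        (∀ k, α k = (A k / 2) * ((∑ j, A j) - C))) ↔
      (∀ k, A k = (α k / ∑ j, α j) *
        ((C / 2) * (1 + Real.sqrt (1 + 8 * (∑ j, α j) / C ^ 2))))) ∧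
    (∀ A : Fin N → ℝ,
      (∀ k, A k = (α k / ∑ j, α j) *
        ((C / 2) * (1 + Real.sqrt (1 + 8 * (∑ j, α j) / C ^ 2)))) →
      (∑ j, A j = (C / 2) * (1 + Real.sqrt (1 + 8 * (∑ j, α j) / C ^ 2)) ∧
       ∀ k, C * A k / (∑ j, A j) = C * α k / (∑ j, α j))) := by
  have : Nonempty (Fin N) := ⟨⟨0, by omega⟩⟩
  have hsumα : ∑ j, α j ≠ 0 := (Finset.sum_pos (fun k _ => hα k) Finset.univ_nonempty).ne'
  refine ⟨stationary_iff_eq_div_sum_mul_stationarySum hC hα, fun A hA => ?_⟩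
  exact ⟨sum_eq_of_eq_div_sum_mul hsumα hA,
    mul_div_sum_eq_of_eq_div_sum_mul hsumα (stationarySum_pos hC).ne' hA C⟩
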